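/- arXiv:1908.02677 — 5 statements merged into one kernel-verified Lean document; each statement's English description precedes it below -/
import Mathlib

section
/- Let (Σ_+, Σ_-, Ω) be a solution of the Bianchi I system Σ_+' = -(2-q)Σ_+, Σ_-' = -(2-q)Σ_-, Ω' = 2(q - q*)Ω with constraint Σ_+^2 + Σ_-^2 + Ω = 1, q = 2(Σ_+^2 + Σ_-^2) + q*Ω, γ ∈ (2/3, 2). If (Σ_+, Σ_-)(0) = (σ_+, σ_-) ≠ (0,0), then the ratio Σ_+/Σ_- is conserved wherever defined, and as τ → -∞ the solution converges to the Kasner point (σ_+, σ_-, 0)/√(σ_+^2 + σ_-^2). -/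
open Real Filter Topology

/-!
On the constraint surface `q - 2 = -(2 - q*) Ω`, so `Σ₊` and `Σ₋` solve the same scalar linear
equation `x' = a x` with `a = -(2 - q*) Ω`; writing `A = ∫₀^τ a`, both are their initial values
times `exp A`, which makes `Σ₊/Σ₋` constant. The density equation reads `Ω' = (2a + c) Ω` with
`c = 2(2 - q*) > 0`, so `Ω = Ω(0) exp (2A + cτ)`, and the constraint becomes
`exp (2A) (σ₊² + σ₋² + Ω(0) e^{cτ}) = 1`. As `τ → -∞` the factor `e^{cτ}` dies, hence
`exp A → (σ₊² + σ₋²)^{-1/2}` and `Ω → 0`.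
-/

theorem eq_mul_exp_sub_of_hasDerivAt_mul {a A x : ℝ → ℝ} (hA : ∀ t, HasDerivAt A (a t) t)
    (hx : ∀ t, HasDerivAt x (a t * x t) t) (t : ℝ) :
    x t = x 0 * exp (A t - A 0) := by
  have hderiv : ∀ s, HasDerivAt (fun s => x s * exp (-A s)) 0 s := fun s =>
    ((hx s).mul (hA s).neg.exp).congr_deriv (by ring)
  have hconst : x t * exp (-A t) = x 0 * exp (-A 0) :=
    is_const_of_deriv_eq_zero (fun s => (hderiv s).differentiableAt)
      (fun s => (hderiv s).deriv) t 0
  calc x t = x t * exp (-A t) * exp (A t) := by rw [mul_assoc, ← exp_add]; simp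
    _ = x 0 * exp (A t - A 0) := by rw [hconst, mul_assoc, ← exp_add, neg_add_eq_sub]

theorem eq_mul_exp_integral_of_hasDerivAt_mul {a x : ℝ → ℝ} (ha : Continuous a)
    (hx : ∀ t, HasDerivAt x (a t * x t) t) (t : ℝ) :
    x t = x 0 * exp (∫ s in (0 : ℝ)..t, a s) := by
  simpa using eq_mul_exp_sub_of_hasDerivAt_mul
    (fun t => (ha.integral_hasStrictDerivAt 0 t).hasDerivAt) hx t

theorem div_eq_div_of_hasDerivAt_mul {a x y : ℝ → ℝ} (ha : Continuous a)
    (hx : ∀ t, HasDerivAt x (a t * x t) t) (hy : ∀ t, HasDerivAt y (a t * y t) t) (τ σ : ℝ) :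
    x τ / y τ = x σ / y σ := by
  rw [eq_mul_exp_integral_of_hasDerivAt_mul ha hx τ, eq_mul_exp_integral_of_hasDerivAt_mul ha hy τ,
    eq_mul_exp_integral_of_hasDerivAt_mul ha hx σ, eq_mul_exp_integral_of_hasDerivAt_mul ha hy σ,
    mul_div_mul_right _ _ (exp_ne_zero _), mul_div_mul_right _ _ (exp_ne_zero _)]

theorem tendsto_inv_sqrt_of_sq_mul_eq_one {α : Type*} {l : Filter α} {E D : α → ℝ} {s : ℝ}
    (hs : 0 < s) (hE : ∀ t, 0 ≤ E t) (hED : ∀ t, E t ^ 2 * D t = 1)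
    (hD : Tendsto D l (𝓝 s)) : Tendsto E l (𝓝 (√s)⁻¹) := by
  have hE_eq : ∀ t, √(D t)⁻¹ = E t := fun t => by
    rw [← eq_inv_of_mul_eq_one_left (hED t), sqrt_sq (hE t)]
  simpa only [hE_eq, sqrt_inv] using (hD.inv₀ hs.ne').sqrt

theorem tendsto_kasner_of_hasDerivAt {a x y Ω : ℝ → ℝ} {c : ℝ} (ha : Continuous a) (hc : 0 < c)
    (hx : ∀ t, HasDerivAt x (a t * x t) t) (hy : ∀ t, HasDerivAt y (a t * y t) t)
    (hΩ : ∀ t, HasDerivAt Ω ((2 * a t + c) * Ω t) t)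
    (hcon : ∀ t, x t ^ 2 + y t ^ 2 + Ω t = 1) (hne : (x 0, y 0) ≠ (0, 0)) :
    Tendsto (fun t => (x t, y t, Ω t)) atBot
      (𝓝 (x 0 / √(x 0 ^ 2 + y 0 ^ 2), y 0 / √(x 0 ^ 2 + y 0 ^ 2), 0)) := by
  set A : ℝ → ℝ := fun t => ∫ s in (0 : ℝ)..t, a s
  have hA : ∀ t, HasDerivAt A (a t) t := fun t => (ha.integral_hasStrictDerivAt 0 t).hasDerivAt
  have hx_eq : ∀ t, x t = x 0 * exp (A t) := eq_mul_exp_integral_of_hasDerivAt_mul ha hx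
  have hy_eq : ∀ t, y t = y 0 * exp (A t) := eq_mul_exp_integral_of_hasDerivAt_mul ha hy
  have h2A : ∀ t, HasDerivAt (fun t => 2 * A t + c * t) (2 * a t + c) t := fun t =>
    (((hA t).const_mul 2).add ((hasDerivAt_id' t).const_mul c)).congr_deriv (by ring)
  have hΩ_eq : ∀ t, Ω t = Ω 0 * exp (c * t) * exp (A t) ^ 2 := fun t => by
    rw [eq_mul_exp_sub_of_hasDerivAt_mul h2A hΩ t]
    simp only [A, intervalIntegral.integral_same, mul_zero, add_zero, sub_zero, exp_add, ← exp_nat_mul]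
    ring_nf
  set s₀ := x 0 ^ 2 + y 0 ^ 2
  have hs₀ : 0 < s₀ := by
    have : x 0 ≠ 0 ∨ y 0 ≠ 0 := by contrapose! hne; simp [hne.1, hne.2]
    rcases this with h | h <;> positivity
  have hED : ∀ t, exp (A t) ^ 2 * (s₀ + Ω 0 * exp (c * t)) = 1 := fun t => by
    rw [← hcon t, hx_eq t, hy_eq t, hΩ_eq t]; ring
  have hexp_ct : Tendsto (fun t => exp (c * t)) atBot (𝓝 0) :=
    tendsto_exp_atBot.comp (tendsto_id.const_mul_atBot hc)
  have hE : Tendsto (fun t => exp (A t)) atBot (𝓝 (√s₀)⁻¹) :=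
    tendsto_inv_sqrt_of_sq_mul_eq_one hs₀ (fun t => (exp_pos _).le) hED
      (by simpa using (hexp_ct.const_mul (Ω 0)).const_add s₀)
  refine ((hE.const_mul (x 0)).congr fun t => (hx_eq t).symm).prodMk_nhds
    (((hE.const_mul (y 0)).congr fun t => (hy_eq t).symm).prodMk_nhds ?_)
  simpa [← hΩ_eq] using ((hexp_ct.const_mul (Ω 0)).mul (hE.pow 2))

theorem bianchiI_past_asymptotics_general
    (γ : ℝ) (hγ : γ ∈ Set.Ioo (2/3 : ℝ) 2)
    (qs : ℝ) (hqs : qs = (3 * γ - 2) / 2)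
    (Sp Sm Om : ℝ → ℝ)
    (q : ℝ → ℝ) (hq : ∀ τ, q τ = 2 * (Sp τ ^ 2 + Sm τ ^ 2) + qs * Om τ)
    (hSp : ∀ τ, HasDerivAt Sp (-(2 - q τ) * Sp τ) τ)
    (hSm : ∀ τ, HasDerivAt Sm (-(2 - q τ) * Sm τ) τ)
    (hOm : ∀ τ, HasDerivAt Om (2 * (q τ - qs) * Om τ) τ)
    (hcon : ∀ τ, Sp τ ^ 2 + Sm τ ^ 2 + Om τ = 1)
    (σp σm : ℝ) (hinit : Sp 0 = σp ∧ Sm 0 = σm)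
    (hne : (σp, σm) ≠ (0, 0)) :
    (∀ τ σ : ℝ, Sm τ ≠ 0 → Sm σ ≠ 0 → Sp τ / Sm τ = Sp σ / Sm σ) ∧
    Tendsto (fun τ => (Sp τ, Sm τ, Om τ)) atBot
      (nhds (σp / Real.sqrt (σp ^ 2 + σm ^ 2),
             σm / Real.sqrt (σp ^ 2 + σm ^ 2), 0)) := by
  obtain ⟨rfl, rfl⟩ := hinit
  have hc : 0 < 2 * (2 - qs) := by rw [hqs]; linarith [hγ.2]
  have hq_sub_two : ∀ τ, -(2 - q τ) = -((2 - qs) * Om τ) := fun τ => by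
    rw [hq]; linarith [hcon τ]
  have ha : Continuous fun τ => -((2 - qs) * Om τ) :=
    (continuous_iff_continuousAt.2 fun τ => (hOm τ).continuousAt).const_mul _ |>.neg
  have hSp' : ∀ τ, HasDerivAt Sp (-((2 - qs) * Om τ) * Sp τ) τ := fun τ => hq_sub_two τ ▸ hSp τ
  have hSm' : ∀ τ, HasDerivAt Sm (-((2 - qs) * Om τ) * Sm τ) τ := fun τ => hq_sub_two τ ▸ hSm τ
  have hOm' : ∀ τ, HasDerivAt Om ((2 * -((2 - qs) * Om τ) + 2 * (2 - qs)) * Om τ) τ :=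
    fun τ => by convert hOm τ using 2; linarith [hq_sub_two τ]
  exact ⟨fun τ σ _ _ => div_eq_div_of_hasDerivAt_mul ha hSp' hSm' τ σ,
    tendsto_kasner_of_hasDerivAt ha hc hSp' hSm' hOm' hcon hne⟩

/-- For Bianchi I solutions with nonzero initial shear, the ratio Σ₊/Σ₋ is
conserved wherever defined, and as τ → -∞ the solution converges to the Kasner
point (σ₊, σ₋, 0)/√(σ₊² + σ₋²). -/
theorem bianchiI_past_asymptotics
    (γ : ℝ) (hγ : γ ∈ Set.Ioo (2/3 : ℝ) 2)
    (qs : ℝ) (hqs : qs = (3 * γ - 2) / 2)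
    (Sp Sm Om : ℝ → ℝ)
    (q : ℝ → ℝ) (hq : ∀ τ, q τ = 2 * (Sp τ ^ 2 + Sm τ ^ 2) + qs * Om τ)
    (hSp : ∀ τ, HasDerivAt Sp (-(2 - q τ) * Sp τ) τ)
    (hSm : ∀ τ, HasDerivAt Sm (-(2 - q τ) * Sm τ) τ)
    (hOm : ∀ τ, HasDerivAt Om (2 * (q τ - qs) * Om τ) τ)
    (hcon : ∀ τ, Sp τ ^ 2 + Sm τ ^ 2 + Om τ = 1)
    (hOmpos : ∀ τ, 0 ≤ Om τ)
    (σp σm : ℝ) (hinit : Sp 0 = σp ∧ Sm 0 = σm)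
    (hne : (σp, σm) ≠ (0, 0)) :
    (∀ τ σ : ℝ, Sm τ ≠ 0 → Sm σ ≠ 0 → Sp τ / Sm τ = Sp σ / Sm σ) ∧
    Tendsto (fun τ => (Sp τ, Sm τ, Om τ)) atBot
      (nhds (σp / Real.sqrt (σp ^ 2 + σm ^ 2),
             σm / Real.sqrt (σp ^ 2 + σm ^ 2), 0)) :=
  bianchiI_past_asymptotics_general γ hγ qs hqs Sp Sm Om q hq hSp hSm hOm hcon σp σm hinit hne
end

section
/- Along solutions of the Bianchi VI_0 Wainwright–Hsu system with Ω > 0 and N_-^2 > N_+^2, the function Z_4 := (N_-^2 - N_+^2)^m Ω^{1-m} / (2 + q*Σ_+)^2 with m = q*/(2+q*) satisfies Z_4' = (4(2-q*)/(2+q*Σ_+)) · [Σ_-^2 + (2Σ_+ + q*)^2/(4 - (q*)^2)] · Z_4; in particular Z_4' ≥ 0, with equality exactly when Σ_- = 0 and Σ_+ = -q*/2. -/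
/-! Writing `A = N₋² - N₊²`, the Wainwright–Hsu equations make `A` and `Ω` exponential along
the flow, `A' = 2(q + 2Σ₊)A` and `Ω' = 2(q - q*)Ω`, so `Z₄` has logarithmic derivative
`2m(q + 2Σ₊) + 2(1-m)(q - q*) - 2q*Σ₊'/(2 + q*Σ₊)`. Eliminating `Ω` with the constraint turns
this rate into the sum of squares `4(2-q*)/(2+q*Σ₊) · [Σ₋² + (2Σ₊+q*)²/(4-q*²)]`, which is
nonnegative and vanishes only at `Σ₋ = 0`, `Σ₊ = -q*/2`, because `Z₄ > 0` and `|q*| < 2`. -/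

open Real

lemma HasDerivAt.sq_sub_sq_of_linear {f g : ℝ → ℝ} {a b x : ℝ}
    (hf : HasDerivAt f (a * f x + b * g x) x) (hg : HasDerivAt g (a * g x + b * f x) x) :
    HasDerivAt (fun t => g t ^ 2 - f t ^ 2) (2 * a * (g x ^ 2 - f x ^ 2)) x :=
  ((hg.pow 2).sub (hf.pow 2)).congr_deriv (by push_cast; ring)

lemma HasDerivAt.rpow_const_of_eq_mul {f : ℝ → ℝ} {α x : ℝ} (p : ℝ)
    (hf : HasDerivAt f (α * f x) x) (hpos : 0 < f x) :
    HasDerivAt (fun t => f t ^ p) (p * α * f x ^ p) x :=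
  (hf.rpow_const (Or.inl hpos.ne')).congr_deriv <| by
    rw [rpow_sub_one hpos.ne']
    field_simp

lemma HasDerivAt.rpow_mul_rpow_div_sq {A O C : ℝ → ℝ} {α β C' x : ℝ} (m : ℝ)
    (hA : HasDerivAt A (α * A x) x) (hO : HasDerivAt O (β * O x) x) (hC : HasDerivAt C C' x)
    (hApos : 0 < A x) (hOpos : 0 < O x) (hC0 : C x ≠ 0) :
    HasDerivAt (fun t => A t ^ m * O t ^ (1 - m) / C t ^ 2)
      ((m * α + (1 - m) * β - 2 * C' / C x) * (A x ^ m * O x ^ (1 - m) / C x ^ 2)) x :=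
  (((hA.rpow_const_of_eq_mul m hApos).mul (hO.rpow_const_of_eq_mul (1 - m) hOpos)).div
    (hC.pow 2) (pow_ne_zero 2 hC0)).congr_deriv <| by
      simp only [Pi.mul_apply, Pi.pow_apply]
      field_simp
      ring

lemma Z4_rate_eq_sum_sq {qs m q s sm a o : ℝ} (hm : m = qs / (2 + qs))
    (hq : q = 2 * (s ^ 2 + sm ^ 2) + qs * o) (hcon : s ^ 2 + sm ^ 2 + a + o = 1)
    (hC : 2 + qs * s ≠ 0) (h2 : 2 + qs ≠ 0) (h4 : 4 - qs ^ 2 ≠ 0) :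
    m * (2 * (q + 2 * s)) + (1 - m) * (2 * (q - qs))
        - 2 * (qs * (-(2 - q) * s - 2 * a)) / (2 + qs * s)
      = 4 * (2 - qs) / (2 + qs * s) * (sm ^ 2 + (2 * s + qs) ^ 2 / (4 - qs ^ 2)) := by
  obtain rfl : o = 1 - s ^ 2 - sm ^ 2 - a := by linarith
  subst hm hq
  field_simp
  ring

section Sign

variable {c qs s sm Z : ℝ}

lemma sum_sq_rate_nonneg (hc : 0 < c) (h4 : 0 < 4 - qs ^ 2) (hZ : 0 < Z) :
    0 ≤ c * (sm ^ 2 + (2 * s + qs) ^ 2 / (4 - qs ^ 2)) * Z := by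
  positivity

lemma sum_sq_rate_eq_zero_iff (hc : 0 < c) (h4 : 0 < 4 - qs ^ 2) (hZ : 0 < Z) :
    c * (sm ^ 2 + (2 * s + qs) ^ 2 / (4 - qs ^ 2)) * Z = 0 ↔ sm = 0 ∧ s = -qs / 2 := by
  have hsq : 0 ≤ (2 * s + qs) ^ 2 / (4 - qs ^ 2) := by positivity
  rw [mul_eq_zero, mul_eq_zero, or_iff_left hZ.ne', or_iff_right hc.ne',
    add_eq_zero_iff_of_nonneg (sq_nonneg sm) hsq, div_eq_zero_iff, or_iff_left h4.ne',
    sq_eq_zero_iff, sq_eq_zero_iff]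
  constructor
  · rintro ⟨hsm, hs⟩
    exact ⟨hsm, by linarith⟩
  · rintro ⟨hsm, rfl⟩
    exact ⟨hsm, by ring⟩

end Sign

theorem Z4_monotone_general
    (γ : ℝ) (hγ : γ ∈ Set.Ioo (2/3 : ℝ) 2)
    (qs : ℝ) (hqs : qs = (3 * γ - 2) / 2)
    (m : ℝ) (hm : m = qs / (2 + qs))
    (Np Nm Sp Sm Om : ℝ → ℝ)
    (q : ℝ → ℝ) (hq : ∀ τ, q τ = 2 * (Sp τ ^ 2 + Sm τ ^ 2) + qs * Om τ)
    (hNp : ∀ τ, HasDerivAt Np ((q τ + 2 * Sp τ) * Np τ + 2 * Real.sqrt 3 * Sm τ * Nm τ) τ)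
    (hNm : ∀ τ, HasDerivAt Nm ((q τ + 2 * Sp τ) * Nm τ + 2 * Real.sqrt 3 * Sm τ * Np τ) τ)
    (hSp : ∀ τ, HasDerivAt Sp (-(2 - q τ) * Sp τ - 2 * (Nm τ ^ 2 - Np τ ^ 2)) τ)
    (hOm : ∀ τ, HasDerivAt Om (2 * (q τ - qs) * Om τ) τ)
    (hcon : ∀ τ, Sp τ ^ 2 + Sm τ ^ 2 + Nm τ ^ 2 - Np τ ^ 2 + Om τ = 1)
    (hOmpos : ∀ τ, 0 < Om τ)
    (hNN : ∀ τ, Np τ ^ 2 < Nm τ ^ 2)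
    (hden : ∀ τ, 0 < 2 + qs * Sp τ)
    (Z4 : ℝ → ℝ)
    (hZ4 : ∀ τ, Z4 τ = (Nm τ ^ 2 - Np τ ^ 2) ^ m * Om τ ^ (1 - m)
        / (2 + qs * Sp τ) ^ 2) :
    ∀ τ,
      HasDerivAt Z4
        (4 * (2 - qs) / (2 + qs * Sp τ)
          * (Sm τ ^ 2 + (2 * Sp τ + qs) ^ 2 / (4 - qs ^ 2)) * Z4 τ) τ ∧
      0 ≤ 4 * (2 - qs) / (2 + qs * Sp τ)
          * (Sm τ ^ 2 + (2 * Sp τ + qs) ^ 2 / (4 - qs ^ 2)) * Z4 τ ∧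
      (4 * (2 - qs) / (2 + qs * Sp τ)
          * (Sm τ ^ 2 + (2 * Sp τ + qs) ^ 2 / (4 - qs ^ 2)) * Z4 τ = 0
        ↔ Sm τ = 0 ∧ Sp τ = -qs / 2) := by
  intro τ
  obtain ⟨hγ₁, hγ₂⟩ := hγ
  have h4 : 0 < 4 - qs ^ 2 := by nlinarith
  have hApos : 0 < Nm τ ^ 2 - Np τ ^ 2 := sub_pos.mpr (hNN τ)
  have hZpos : 0 < Z4 τ := hZ4 τ ▸ div_pos
    (mul_pos (rpow_pos_of_pos hApos m) (rpow_pos_of_pos (hOmpos τ) (1 - m))) (pow_pos (hden τ) 2)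
  have hrate : 0 < 4 * (2 - qs) / (2 + qs * Sp τ) := div_pos (by linarith) (hden τ)
  refine ⟨?_, sum_sq_rate_nonneg hrate h4 hZpos, sum_sq_rate_eq_zero_iff hrate h4 hZpos⟩
  have hA := (hNp τ).sq_sub_sq_of_linear (hNm τ)
  have hC := ((hSp τ).const_mul qs).const_add 2
  have hZ := hA.rpow_mul_rpow_div_sq m (hOm τ) hC hApos (hOmpos τ) (hden τ).ne'
  rw [hZ4, show Z4 = _ from funext hZ4]
  refine hZ.congr_deriv ?_
  rw [Z4_rate_eq_sum_sq hm (hq τ) (by linarith [hcon τ]) (hden τ).ne' (by linarith) h4.ne']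

/-- The monotone function Z₄ = (N₋²-N₊²)^m Ω^{1-m}/(2+q*Σ₊)² with m = q*/(2+q*)
satisfies the stated evolution equation along the Bianchi VI₀ flow, its
derivative is nonnegative, and it vanishes exactly when Σ₋ = 0 and Σ₊ = -q*/2. -/
theorem Z4_monotone
    (γ : ℝ) (hγ : γ ∈ Set.Ioo (2/3 : ℝ) 2)
    (qs : ℝ) (hqs : qs = (3 * γ - 2) / 2)
    (m : ℝ) (hm : m = qs / (2 + qs))
    (Np Nm Sp Sm Om : ℝ → ℝ)
    (q : ℝ → ℝ) (hq : ∀ τ, q τ = 2 * (Sp τ ^ 2 + Sm τ ^ 2) + qs * Om τ)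
    (hNp : ∀ τ, HasDerivAt Np ((q τ + 2 * Sp τ) * Np τ + 2 * Real.sqrt 3 * Sm τ * Nm τ) τ)
    (hNm : ∀ τ, HasDerivAt Nm ((q τ + 2 * Sp τ) * Nm τ + 2 * Real.sqrt 3 * Sm τ * Np τ) τ)
    (hSp : ∀ τ, HasDerivAt Sp (-(2 - q τ) * Sp τ - 2 * (Nm τ ^ 2 - Np τ ^ 2)) τ)
    (hSm : ∀ τ, HasDerivAt Sm (-(2 - q τ) * Sm τ - 2 * Real.sqrt 3 * Np τ * Nm τ) τ)
    (hOm : ∀ τ, HasDerivAt Om (2 * (q τ - qs) * Om τ) τ)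
    (hcon : ∀ τ, Sp τ ^ 2 + Sm τ ^ 2 + Nm τ ^ 2 - Np τ ^ 2 + Om τ = 1)
    (hOmpos : ∀ τ, 0 < Om τ)
    (hNN : ∀ τ, Np τ ^ 2 < Nm τ ^ 2)
    (hden : ∀ τ, 0 < 2 + qs * Sp τ)
    (Z4 : ℝ → ℝ)
    (hZ4 : ∀ τ, Z4 τ = (Nm τ ^ 2 - Np τ ^ 2) ^ m * Om τ ^ (1 - m)
        / (2 + qs * Sp τ) ^ 2) :
    ∀ τ,
      HasDerivAt Z4
        (4 * (2 - qs) / (2 + qs * Sp τ)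
          * (Sm τ ^ 2 + (2 * Sp τ + qs) ^ 2 / (4 - qs ^ 2)) * Z4 τ) τ ∧
      0 ≤ 4 * (2 - qs) / (2 + qs * Sp τ)
          * (Sm τ ^ 2 + (2 * Sp τ + qs) ^ 2 / (4 - qs ^ 2)) * Z4 τ ∧
      (4 * (2 - qs) / (2 + qs * Sp τ)
          * (Sm τ ^ 2 + (2 * Sp τ + qs) ^ 2 / (4 - qs ^ 2)) * Z4 τ = 0
        ↔ Sm τ = 0 ∧ Sp τ = -qs / 2) :=
  Z4_monotone_general γ hγ qs hqs m hm Np Nm Sp Sm Om q hq hNp hNm hSp hOm hcon hOmpos hNN hden Z4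
    hZ4
end

section
/- Along solutions of the Bianchi VI_0 Wainwright–Hsu system with N_-^2 > N_+^2 and (Σ_-, N_+) ≠ (0,0), the function Z_1 := (Σ_-^2 + N_+^2)/(N_-^2 - N_+^2) satisfies Z_1' = -4 (Σ_-^2 (1+Σ_+)/(Σ_-^2 + N_+^2)) Z_1; in particular Z_1 is non-increasing when Σ_+ ≥ -1. -/
/-!
Write `Z₁ = A / B` with `A = Σ₋² + N₊²` and `B = N₋² - N₊²`. In `A'` and `B'` the `2√3`
cross terms cancel, leaving `A' = -2(2 - q)Σ₋² + 2(q + 2Σ₊)N₊²` and `B' = 2(q + 2Σ₊)B`.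
In the quotient rule the deceleration parameter `q` then drops out, giving
`Z₁' = -4 Σ₋²(1 + Σ₊) / B`, whose sign is that of `-(1 + Σ₊)` because `B > 0`.
-/

section BianchiVI0

variable {Np Nm Sp Sm q : ℝ → ℝ} {τ : ℝ}

theorem hasDerivAt_sq_add_sq_of_bianchiVI0
    (hNp : HasDerivAt Np ((q τ + 2 * Sp τ) * Np τ + 2 * Real.sqrt 3 * Sm τ * Nm τ) τ)
    (hSm : HasDerivAt Sm (-(2 - q τ) * Sm τ - 2 * Real.sqrt 3 * Np τ * Nm τ) τ) :
    HasDerivAt (fun t => Sm t ^ 2 + Np t ^ 2)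
      (-2 * (2 - q τ) * Sm τ ^ 2 + 2 * (q τ + 2 * Sp τ) * Np τ ^ 2) τ :=
  ((hSm.pow 2).add (hNp.pow 2)).congr_deriv (by push_cast; ring)

theorem hasDerivAt_sq_sub_sq_of_bianchiVI0
    (hNp : HasDerivAt Np ((q τ + 2 * Sp τ) * Np τ + 2 * Real.sqrt 3 * Sm τ * Nm τ) τ)
    (hNm : HasDerivAt Nm ((q τ + 2 * Sp τ) * Nm τ + 2 * Real.sqrt 3 * Sm τ * Np τ) τ) :
    HasDerivAt (fun t => Nm t ^ 2 - Np t ^ 2)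
      (2 * (q τ + 2 * Sp τ) * (Nm τ ^ 2 - Np τ ^ 2)) τ :=
  ((hNm.pow 2).sub (hNp.pow 2)).congr_deriv (by push_cast; ring)

theorem hasDerivAt_div_of_bianchiVI0
    (hNp : HasDerivAt Np ((q τ + 2 * Sp τ) * Np τ + 2 * Real.sqrt 3 * Sm τ * Nm τ) τ)
    (hNm : HasDerivAt Nm ((q τ + 2 * Sp τ) * Nm τ + 2 * Real.sqrt 3 * Sm τ * Np τ) τ)
    (hSm : HasDerivAt Sm (-(2 - q τ) * Sm τ - 2 * Real.sqrt 3 * Np τ * Nm τ) τ)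
    (hB : Nm τ ^ 2 - Np τ ^ 2 ≠ 0) :
    HasDerivAt (fun t => (Sm t ^ 2 + Np t ^ 2) / (Nm t ^ 2 - Np t ^ 2))
      (-4 * Sm τ ^ 2 * (1 + Sp τ) / (Nm τ ^ 2 - Np τ ^ 2)) τ := by
  refine ((hasDerivAt_sq_add_sq_of_bianchiVI0 hNp hSm).div
    (hasDerivAt_sq_sub_sq_of_bianchiVI0 hNp hNm) hB).congr_deriv ?_
  field_simp
  ring

end BianchiVI0

/-- The factor `x ^ 2 + y ^ 2` cancels even when it vanishes, since then `x = 0`. -/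
theorem div_sq_add_sq_mul_sq_add_sq_div (x y c b : ℝ) :
    x ^ 2 * c / (x ^ 2 + y ^ 2) * ((x ^ 2 + y ^ 2) / b) = x ^ 2 * c / b := by
  rcases eq_or_ne (x ^ 2 + y ^ 2) 0 with h | h
  · have hx : x = 0 := by nlinarith [sq_nonneg x, sq_nonneg y]
    simp [hx]
  · field_simp

theorem Z1_monotone_general
    (Np Nm Sp Sm : ℝ → ℝ)
    (q : ℝ → ℝ)
    (hNp : ∀ τ, HasDerivAt Np ((q τ + 2 * Sp τ) * Np τ + 2 * Real.sqrt 3 * Sm τ * Nm τ) τ)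
    (hNm : ∀ τ, HasDerivAt Nm ((q τ + 2 * Sp τ) * Nm τ + 2 * Real.sqrt 3 * Sm τ * Np τ) τ)
    (hSm : ∀ τ, HasDerivAt Sm (-(2 - q τ) * Sm τ - 2 * Real.sqrt 3 * Np τ * Nm τ) τ)
    (hNN : ∀ τ, Np τ ^ 2 < Nm τ ^ 2)
    (Z1 : ℝ → ℝ)
    (hZ1 : ∀ τ, Z1 τ = (Sm τ ^ 2 + Np τ ^ 2) / (Nm τ ^ 2 - Np τ ^ 2)) :
    (∀ τ, HasDerivAt Z1
        (-4 * (Sm τ ^ 2 * (1 + Sp τ) / (Sm τ ^ 2 + Np τ ^ 2)) * Z1 τ) τ) ∧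
    ((∀ τ, -1 ≤ Sp τ) → Antitone Z1) := by
  have hB : ∀ τ, 0 < Nm τ ^ 2 - Np τ ^ 2 := fun τ => sub_pos.mpr (hNN τ)
  obtain rfl : Z1 = fun t => (Sm t ^ 2 + Np t ^ 2) / (Nm t ^ 2 - Np t ^ 2) := funext hZ1
  have hZ1' τ := hasDerivAt_div_of_bianchiVI0 (hNp τ) (hNm τ) (hSm τ) (hB τ).ne'
  refine ⟨fun τ => ?_, fun hSp => antitone_of_hasDerivAt_nonpos hZ1' fun τ => ?_⟩
  · refine (hZ1' τ).congr_deriv ?_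
    rw [mul_assoc _ (_ / _), div_sq_add_sq_mul_sq_add_sq_div, mul_div_assoc, mul_div_assoc,
      mul_assoc]
  · have : 0 ≤ Sm τ ^ 2 * (1 + Sp τ) := mul_nonneg (sq_nonneg _) (by linarith [hSp τ])
    exact div_nonpos_of_nonpos_of_nonneg (by linarith) (hB τ).le

/-- The function Z₁ = (Σ₋²+N₊²)/(N₋²-N₊²) satisfies
Z₁' = -4(Σ₋²(1+Σ₊)/(Σ₋²+N₊²))Z₁ along the Bianchi VI₀ flow; in particular Z₁
is non-increasing when Σ₊ ≥ -1. -/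
theorem Z1_monotone
    (qs : ℝ) (Np Nm Sp Sm Om : ℝ → ℝ)
    (q : ℝ → ℝ) (hq : ∀ τ, q τ = 2 * (Sp τ ^ 2 + Sm τ ^ 2) + qs * Om τ)
    (hNp : ∀ τ, HasDerivAt Np ((q τ + 2 * Sp τ) * Np τ + 2 * Real.sqrt 3 * Sm τ * Nm τ) τ)
    (hNm : ∀ τ, HasDerivAt Nm ((q τ + 2 * Sp τ) * Nm τ + 2 * Real.sqrt 3 * Sm τ * Np τ) τ)
    (hSp : ∀ τ, HasDerivAt Sp (-(2 - q τ) * Sp τ - 2 * (Nm τ ^ 2 - Np τ ^ 2)) τ)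
    (hSm : ∀ τ, HasDerivAt Sm (-(2 - q τ) * Sm τ - 2 * Real.sqrt 3 * Np τ * Nm τ) τ)
    (hcon : ∀ τ, Sp τ ^ 2 + Sm τ ^ 2 + Nm τ ^ 2 - Np τ ^ 2 + Om τ = 1)
    (hNN : ∀ τ, Np τ ^ 2 < Nm τ ^ 2)
    (hnz : ∀ τ, (Sm τ, Np τ) ≠ (0, 0))
    (Z1 : ℝ → ℝ)
    (hZ1 : ∀ τ, Z1 τ = (Sm τ ^ 2 + Np τ ^ 2) / (Nm τ ^ 2 - Np τ ^ 2)) :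
    (∀ τ, HasDerivAt Z1
        (-4 * (Sm τ ^ 2 * (1 + Sp τ) / (Sm τ ^ 2 + Np τ ^ 2)) * Z1 τ) τ) ∧
    ((∀ τ, -1 ≤ Sp τ) → Antitone Z1) :=
  Z1_monotone_general Np Nm Sp Sm q hNp hNm hSm hNN Z1 hZ1
end

section
/- On the shear invariant set {Σ_- = 0, N_+ = 0} of the Bianchi VI_0 system, substituting the constraint N_-^2 = 1 - Ω - Σ_+^2 yields Σ_+' = -2N_-^2(1 + Σ_+) - (2 - q*)ΩΣ_+; consequently, along a solution in this set with N_- > 0 and Ω > 0, if Σ_+(s) > 0 at some time s then Σ_+ is strictly decreasing on (-∞, s]. -/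
/-- On the shear invariant set (Σ₋ = 0, N₊ = 0) of the Bianchi VI₀ system,
substituting the constraint gives Σ₊' = -2N₋²(1+Σ₊) - (2-q*)ΩΣ₊; hence along a
solution with N₋ > 0 and Ω > 0, if Σ₊(s) > 0 then Σ₊ is strictly decreasing on
(-∞, s]. -/
theorem shear_invariant_Sp_decreasing
    (γ : ℝ) (hγ : γ ∈ Set.Ioo (2/3 : ℝ) 2)
    (qs : ℝ) (hqs : qs = (3 * γ - 2) / 2)
    (Sp Nm Om : ℝ → ℝ)
    (q : ℝ → ℝ) (hq : ∀ τ, q τ = 2 * Sp τ ^ 2 + qs * Om τ)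
    (hSp : ∀ τ, HasDerivAt Sp (-(2 - q τ) * Sp τ - 2 * Nm τ ^ 2) τ)
    (hNm : ∀ τ, HasDerivAt Nm ((q τ + 2 * Sp τ) * Nm τ) τ)
    (hOm : ∀ τ, HasDerivAt Om (2 * (q τ - qs) * Om τ) τ)
    (hcon : ∀ τ, Sp τ ^ 2 + Nm τ ^ 2 + Om τ = 1) :
    (∀ τ, HasDerivAt Sp
        (-2 * Nm τ ^ 2 * (1 + Sp τ) - (2 - qs) * Om τ * Sp τ) τ) ∧
    ((∀ τ, 0 < Nm τ) → (∀ τ, 0 < Om τ) →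
      ∀ s : ℝ, 0 < Sp s → StrictAntiOn Sp (Set.Iic s)) := by
  have hSp' : ∀ τ, HasDerivAt Sp
      (-2 * Nm τ ^ 2 * (1 + Sp τ) - (2 - qs) * Om τ * Sp τ) τ := by
    intro τ
    have h := hSp τ
    have heq : -(2 - q τ) * Sp τ - 2 * Nm τ ^ 2
        = -2 * Nm τ ^ 2 * (1 + Sp τ) - (2 - qs) * Om τ * Sp τ := by
      rw [hq]
      linear_combination (2 * Sp τ) * (hcon τ)
    rwa [heq] at h
  refine ⟨hSp', ?_⟩
  intro hNpos hOpos s hs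
  have hqs2 : qs < 2 := by rw [hqs]; linarith [hγ.2]
  have hcont : Continuous Sp :=
    continuous_iff_continuousAt.mpr fun x => (hSp x).continuousAt
  have hSpbd : ∀ τ, -1 < Sp τ := by
    intro τ
    nlinarith [hcon τ, hNpos τ, hOpos τ, sq_nonneg (Nm τ), sq_nonneg (1 + Sp τ)]
  -- derivative is negative wherever Sp ≥ 0
  have hderiv_neg : ∀ τ, 0 ≤ Sp τ →
      -2 * Nm τ ^ 2 * (1 + Sp τ) - (2 - qs) * Om τ * Sp τ < 0 := by
    intro τ hτ
    nlinarith [pow_pos (hNpos τ) 2, hSpbd τ, mul_nonneg (hOpos τ).le hτ]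
  -- Sp is positive on Iic s
  have hpos : ∀ t ∈ Set.Iic s, 0 < Sp t := by
    intro t ht
    by_contra hle
    push_neg at hle
    have hts : t < s := lt_of_le_of_ne ht (by rintro rfl; linarith)
    set A : Set ℝ := Set.Icc t s ∩ Sp ⁻¹' Set.Iic 0 with hA
    have hAc : IsCompact A :=
      (isCompact_Icc).inter_right (isClosed_Iic.preimage hcont)
    have hAne : A.Nonempty := ⟨t, ⟨le_refl t, le_of_lt hts⟩, hle⟩
    obtain ⟨u, huA, hub⟩ := hAc.exists_isGreatest hAne
    have huSp : Sp u ≤ 0 := huA.2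
    have hus : u < s := lt_of_le_of_ne huA.1.2 (by rintro rfl; linarith)
    have hposU : ∀ x ∈ Set.Ioc u s, 0 < Sp x := by
      intro x hx
      by_contra hx0
      push_neg at hx0
      have : x ∈ A := ⟨⟨le_trans huA.1.1 hx.1.le, hx.2⟩, hx0⟩
      exact absurd (hub this) (not_le.mpr hx.1)
    have hanti : StrictAntiOn Sp (Set.Icc u s) := by
      apply StrictAntiOn.mono ?_ (le_refl _)
      apply strictAntiOn_of_deriv_neg (convex_Icc u s) (hcont.continuousOn)
      intro x hx
      rw [interior_Icc] at hx
      rw [(hSp' x).deriv]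
      exact hderiv_neg x (hposU x ⟨hx.1, hx.2.le⟩).le
    have := hanti (Set.left_mem_Icc.mpr hus.le) (Set.right_mem_Icc.mpr hus.le) hus
    linarith
  -- conclude
  apply strictAntiOn_of_deriv_neg (convex_Iic s) (hcont.continuousOn)
  intro x hx
  rw [interior_Iic] at hx
  rw [(hSp' x).deriv]
  exact hderiv_neg x (hpos x (Set.mem_Iic.mpr hx.le)).le
end

section
/- Let Σ_+ : (-∞, τ_0] → ℝ be differentiable with Σ_+(τ_0) > 0 and satisfy Σ_+' ≤ -(2-q*)ΩΣ_+ where Ω ≥ 0 is continuous and q* < 2, and suppose Σ_+ > 0 on (-∞, τ_0]. If Σ_+ is bounded above (by 1), then ∫_{-∞}^{τ_0} Ω(s) ds < ∞; if furthermore Ω has bounded derivative, then Ω(τ) → 0 as τ → -∞. -/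
open Filter

/-- If Σ₊ > 0 on (-∞, τ₀] is bounded above by 1 and satisfies
Σ₊' ≤ -(2-q*)ΩΣ₊ with Ω ≥ 0 continuous and q* < 2, then Ω is integrable on
(-∞, τ₀]; if furthermore Ω has bounded derivative, then Ω → 0 as τ → -∞. -/
theorem omega_integrable_and_decay
    (qs : ℝ) (hqs : qs < 2)
    (Sp Sp' Om : ℝ → ℝ) (τ₀ : ℝ)
    (hOmcont : Continuous Om) (hOmnonneg : ∀ τ, 0 ≤ Om τ)
    (hSppos : ∀ τ ≤ τ₀, 0 < Sp τ) (hSpbd : ∀ τ ≤ τ₀, Sp τ ≤ 1)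
    (hSpderiv : ∀ τ ≤ τ₀, HasDerivAt Sp (Sp' τ) τ)
    (hineq : ∀ τ ≤ τ₀, Sp' τ ≤ -(2 - qs) * Om τ * Sp τ) :
    MeasureTheory.IntegrableOn Om (Set.Iic τ₀) ∧
    ∀ (Om' : ℝ → ℝ) (M : ℝ), (∀ τ, HasDerivAt Om (Om' τ) τ) →
      (∀ τ, |Om' τ| ≤ M) → Tendsto Om atBot (nhds 0) := by
  have h2 : (0:ℝ) < 2 - qs := by linarith
  set J : ℝ → ℝ := fun τ => ∫ s in τ₀..τ, Om s with hJdef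
  set K : ℝ → ℝ := fun τ => Real.log (Sp τ) + (2 - qs) * J τ with hKdef
  have hJderiv : ∀ x : ℝ, HasDerivAt J (Om x) x := fun x =>
    (hOmcont.integral_hasStrictDerivAt τ₀ x).hasDerivAt
  have hKderiv : ∀ x ≤ τ₀, HasDerivAt K (Sp' x / Sp x + (2 - qs) * Om x) x := by
    intro x hx
    exact ((hSpderiv x hx).log (ne_of_gt (hSppos x hx))).add ((hJderiv x).const_mul (2 - qs))
  have hanti : AntitoneOn K (Set.Iic τ₀) := by
    apply antitoneOn_of_deriv_nonpos (convex_Iic τ₀)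
    · intro x hx
      exact (Real.continuousAt_log (ne_of_gt (hSppos x hx))).comp_continuousWithinAt
        (hSpderiv x hx).continuousAt.continuousWithinAt |>.add
        (((hJderiv x).continuousAt.continuousWithinAt).const_smul (2 - qs))
    · intro x hx
      rw [interior_Iic] at hx
      exact ((hKderiv x hx.le).differentiableAt).differentiableWithinAt
    · intro x hx
      rw [interior_Iic] at hx
      rw [(hKderiv x hx.le).deriv]
      have h1 := hineq x hx.le
      have hpos := hSppos x hx.le
      have hdiv : Sp' x / Sp x ≤ -(2 - qs) * Om x := by
        rw [div_le_iff₀ hpos]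
        exact h1
      linarith
  have key : ∀ τ ≤ τ₀, (∫ s in τ..τ₀, Om s) ≤ -Real.log (Sp τ₀) / (2 - qs) := by
    intro τ hτ
    have hK := hanti (Set.mem_Iic.mpr hτ) (Set.mem_Iic.mpr le_rfl) hτ
    have hJ0 : J τ₀ = 0 := intervalIntegral.integral_same
    have hsymm : (∫ s in τ..τ₀, Om s) = -J τ := by
      rw [hJdef]; simp [intervalIntegral.integral_symm τ₀ τ]
    have hlog0 : Real.log (Sp τ) ≤ 0 :=
      Real.log_nonpos (hSppos τ hτ).le (hSpbd τ hτ)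
    rw [le_div_iff₀ h2]
    have hK' : Real.log (Sp τ₀) ≤ Real.log (Sp τ) + (2 - qs) * J τ := by
      simpa [hKdef, hJ0] using hK
    rw [hsymm]
    nlinarith
  have hint : MeasureTheory.IntegrableOn Om (Set.Iic τ₀) := by
    apply MeasureTheory.integrableOn_Iic_of_intervalIntegral_norm_bounded
      (-Real.log (Sp τ₀) / (2 - qs)) τ₀ (fun i : ℝ => hOmcont.integrableOn_Ioc) tendsto_id
    filter_upwards [eventually_le_atBot τ₀] with i hi
    have heq : (∫ x in i..τ₀, ‖Om x‖) = ∫ x in i..τ₀, Om x := by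
      apply intervalIntegral.integral_congr
      intro x _
      exact Real.norm_of_nonneg (hOmnonneg x)
    simp only [id_eq]
    rw [heq]
    exact key i hi
  refine ⟨hint, ?_⟩
  intro Om' M hderiv hbd
  set M' : ℝ := max M 1 with hM'def
  have hM' : (0:ℝ) < M' := lt_of_lt_of_le one_pos (le_max_right M 1)
  have hlip : ∀ x y : ℝ, |Om x - Om y| ≤ M' * |x - y| := by
    intro x y
    have := Convex.norm_image_sub_le_of_norm_hasDerivWithin_le
      (f := Om) (f' := Om') (s := Set.univ) (C := M')
      (fun z _ => (hderiv z).hasDerivWithinAt)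
      (fun z _ => le_trans (hbd z) (le_max_left M 1)) convex_univ
      (Set.mem_univ y) (Set.mem_univ x)
    simpa [Real.norm_eq_abs] using this
  rw [Metric.tendsto_nhds]
  intro ε hε
  set δ : ℝ := ε / (2 * M') with hδdef
  have hδ : 0 < δ := div_pos hε (by positivity)
  set L : ℝ := ∫ x in Set.Iic τ₀, Om x with hLdef
  have ht : Tendsto (fun a : ℝ => ∫ x in a..τ₀, Om x) atBot (nhds L) :=
    MeasureTheory.intervalIntegral_tendsto_integral_Iic τ₀ hint tendsto_id
  have hev : ∀ᶠ a in atBot, |(∫ x in a..τ₀, Om x) - L| < δ * ε / 8 := by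
    have := Metric.tendsto_nhds.mp ht (δ * ε / 8) (by positivity)
    simpa [Real.dist_eq] using this
  rw [eventually_atBot] at hev
  obtain ⟨A, hA⟩ := hev
  rw [eventually_atBot]
  refine ⟨min A τ₀, fun τ hτ => ?_⟩
  have hτA : τ ≤ A := le_trans hτ (min_le_left A τ₀)
  have hττ₀ : τ ≤ τ₀ := le_trans hτ (min_le_right A τ₀)
  rw [Real.dist_eq, sub_zero, abs_of_nonneg (hOmnonneg τ)]
  by_contra hcon
  push_neg at hcon
  -- Om is at least ε/2 on [τ - δ, τ]
  have hlow : ∀ t ∈ Set.Icc (τ - δ) τ, ε / 2 ≤ Om t := by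
    intro t ht'
    have h1 : |Om t - Om τ| ≤ M' * |t - τ| := hlip t τ
    have h2 : |t - τ| ≤ δ := by
      rw [abs_le]
      constructor <;> [linarith [ht'.1]; linarith [ht'.2]]
    have h3 : M' * |t - τ| ≤ M' * δ := by nlinarith
    have h4 : M' * δ = ε / 2 := by
      rw [hδdef]; field_simp
    have h5 := abs_le.mp (le_trans h1 (h3.trans h4.le))
    linarith
  have hii : ∀ a b : ℝ, IntervalIntegrable Om MeasureTheory.volume a b :=
    fun a b => hOmcont.intervalIntegrable a b
  have hsplit : (∫ x in (τ - δ)..τ₀, Om x) =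
      (∫ x in (τ - δ)..τ, Om x) + ∫ x in τ..τ₀, Om x :=
    (intervalIntegral.integral_add_adjacent_intervals (hii _ _) (hii _ _)).symm
  have hmono : δ * (ε / 2) ≤ ∫ x in (τ - δ)..τ, Om x := by
    have := intervalIntegral.integral_mono_on (by linarith : τ - δ ≤ τ)
      (intervalIntegrable_const) (hii _ _) hlow
    rw [intervalIntegral.integral_const] at this
    have : (τ - (τ - δ)) • (ε / 2) ≤ ∫ x in (τ - δ)..τ, Om x := this
    simpa [smul_eq_mul, sub_sub_cancel] using this
  have hb1 := hA (τ - δ) (by linarith)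
  have hb2 := hA τ hτA
  rw [abs_lt] at hb1 hb2
  have : δ * (ε / 2) ≤ δ * ε / 4 := by
    rw [hsplit] at hb1
    linarith [hb1.2, hb2.1]
  nlinarith
end
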